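/- Let X be a Banach lattice whose dual X* is w*-separable. Then X is IWCG if and only if X has a quasi-interior point, and X is BWCG if and only if X has a weak order unit. -/

import Mathlib

open Filter Topology Set

section Defs

variable {E : Type*} [NormedAddCommGroup E] [NormedSpace ℝ E]

/-- A set is weakly compact if it is compact in the weak topology. -/
def WeaklyCompact (K : Set E) : Prop := IsCompact (toWeakSpace ℝ E '' K)

/-- A set is weakly precompact if every sequence in it has a weakly Cauchy subsequence. -/
def WeaklyPrecompact (K : Set E) : Prop :=
  ∀ x : ℕ → E, (∀ n, x n ∈ K) → ∃ φ : ℕ → ℕ, StrictMono φ ∧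
    ∀ f : E →L[ℝ] ℝ, ∃ l : ℝ, Tendsto (fun n => f (x (φ n))) atTop (𝓝 l)

end Defs

section LatDefs

variable {E : Type*} [NormedAddCommGroup E] [Lattice E] [NormedSpace ℝ E]

/-- A closed sublattice: a closed linear subspace closed under `⊔` and `⊓`. -/
def IsClosedSublattice (S : Set E) : Prop :=
  IsClosed S ∧ (0 : E) ∈ S ∧ (∀ x ∈ S, ∀ y ∈ S, x + y ∈ S) ∧
    (∀ c : ℝ, ∀ x ∈ S, c • x ∈ S) ∧
    (∀ x ∈ S, ∀ y ∈ S, x ⊔ y ∈ S) ∧ (∀ x ∈ S, ∀ y ∈ S, x ⊓ y ∈ S)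

/-- `L(A)`: the smallest closed sublattice containing `A`. -/
def sublatticeGen (A : Set E) : Set E := ⋂₀ {S | IsClosedSublattice S ∧ A ⊆ S}

/-- The solid hull of a set. -/
def solidHull (A : Set E) : Set E := ⋃ x ∈ A, Set.Icc (-|x|) |x|

/-- A closed ideal: a closed linear subspace which is solid. -/
def IsClosedIdeal (S : Set E) : Prop :=
  IsClosed S ∧ (0 : E) ∈ S ∧ (∀ x ∈ S, ∀ y ∈ S, x + y ∈ S) ∧
    (∀ c : ℝ, ∀ x ∈ S, c • x ∈ S) ∧
    (∀ x : E, ∀ y ∈ S, |x| ≤ |y| → x ∈ S)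

/-- `I(A)`: the smallest closed ideal containing `A`. -/
def idealGen (A : Set E) : Set E := ⋂₀ {S | IsClosedIdeal S ∧ A ⊆ S}

/-- A band: a closed ideal closed under existing suprema. -/
def IsBand (S : Set E) : Prop :=
  IsClosedIdeal S ∧ ∀ D ⊆ S, ∀ x : E, IsLUB D x → x ∈ S

/-- `B(A)`: the smallest band containing `A`. -/
def bandGen (A : Set E) : Set E := ⋂₀ {S | IsBand S ∧ A ⊆ S}

/-- Disjoint complement of a set. -/
def disjComplement (A : Set E) : Set E := {x : E | ∀ y ∈ A, |x| ⊓ |y| = 0}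

end LatDefs

/-- Order continuity of the norm: every downward directed set with infimum `0`
has norms converging to `0` along the order. -/
def OrderContinuousBL (E : Type*) [NormedAddCommGroup E] [Lattice E] : Prop :=
  ∀ D : Set E, D.Nonempty → DirectedOn (· ≥ ·) D → IsGLB D 0 →
    ∀ ε > 0, ∃ d ∈ D, ∀ e ∈ D, e ≤ d → ‖e‖ < ε

/-- Density character of a topological space. -/
noncomputable def densChar (T : Type*) [TopologicalSpace T] : Cardinal :=
  sInf {c : Cardinal | ∃ s : Set T, Dense s ∧ Cardinal.mk s = c}

/-!
A w*-dense sequence in `X*` separates the points of `X`, so every weakly compact `K ⊆ X` is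
weakly metrizable, hence lies in the weak closure of a sequence `(xₙ)`. For a suitably weighted
sum `u = ∑ cₙ |xₙ|` every `xₙ` lies in the ideal generated by `u`; closed ideals are convex, hence
weakly closed, so every closed ideal containing `u` contains `K`. For `I(u)` this makes `u`
a quasi-interior point as soon as `I(K) = X`; for the band `{w}ᗮ` with `w ⊥ u` it gives `w ⊥ w`
as soon as `B(K) = X`, so `u` is a weak order unit. Conversely singletons are weakly compact,
and a weak order unit generates `X` as a band since `y = sup (y ⊓ n • u)` for `y ≥ 0`.
-/

/- `Lattice` and `IsOrderedAddMonoid` only couple the order with addition; compatibility with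
real scalars follows from `0 ≤ 2 • a → 0 ≤ a` (dyadic scalars) and the closedness of the
positive cone. -/
theorem posSMulMono_real_of_orderClosedTopology {X : Type*} [AddCommGroup X] [Lattice X]
    [IsOrderedAddMonoid X] [TopologicalSpace X] [OrderClosedTopology X] [Module ℝ X]
    [ContinuousSMul ℝ X] : PosSMulMono ℝ X := by
  refine PosSMulMono.of_smul_nonneg fun c hc y hy => ?_
  have half : ∀ k : ℕ, 0 ≤ ((2 : ℝ) ^ k)⁻¹ • y := by
    intro k
    induction k with
    | zero => simpa using hy
    | succ k ih =>
      refine nsmul_two_semiclosed ?_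
      rwa [two_nsmul, ← add_smul, pow_succ, mul_inv, ← mul_two, mul_assoc,
        inv_mul_cancel₀ two_ne_zero, mul_one]
  have dyadic : ∀ k : ℕ, 0 ≤ ((⌊c * 2 ^ k⌋₊ : ℝ) / 2 ^ k) • y := fun k => by
    rw [div_eq_mul_inv, mul_smul, Nat.cast_smul_eq_nsmul]
    exact nsmul_nonneg (half k) _
  have hlim : Tendsto (fun k : ℕ => (⌊c * 2 ^ k⌋₊ : ℝ) / 2 ^ k) atTop (𝓝 c) :=
    (tendsto_nat_floor_mul_div_atTop hc).comp
      (tendsto_pow_atTop_atTop_of_one_lt one_lt_two)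
  exact isClosed_Ici.mem_of_tendsto (hlim.smul_const y) (Eventually.of_forall dyadic)

section LatticeOrderedGroup

variable {α : Type*} [AddCommGroup α] [Lattice α] [IsOrderedAddMonoid α] {a b c t : α}

theorem inf_add_le_inf_add_inf (ha : 0 ≤ a) (hb : 0 ≤ b) (hc : 0 ≤ c) :
    a ⊓ (b + c) ≤ a ⊓ b + a ⊓ c := by
  rw [add_inf, inf_add, inf_add]
  refine le_inf (le_inf ?_ ?_) (le_inf ?_ inf_le_right)
  · exact inf_le_left.trans (le_add_of_nonneg_right ha)
  · exact inf_le_left.trans (le_add_of_nonneg_left hb)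
  · exact inf_le_left.trans (le_add_of_nonneg_right hc)

theorem inf_nsmul_le_nsmul_inf (ha : 0 ≤ a) (hb : 0 ≤ b) (n : ℕ) :
    a ⊓ n • b ≤ n • (a ⊓ b) := by
  induction n with
  | zero => simp
  | succ n ih =>
    rw [succ_nsmul, succ_nsmul]
    exact (inf_add_le_inf_add_inf ha (nsmul_nonneg hb n) hb).trans (add_le_add ih le_rfl)

theorem inf_eq_zero_of_le_nsmul (ha : 0 ≤ a) (hb : 0 ≤ b) (hab : a ⊓ b = 0) (ht : 0 ≤ t)
    {n : ℕ} (htn : t ≤ n • b) : a ⊓ t = 0 :=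
  le_antisymm
    (calc a ⊓ t ≤ a ⊓ n • b := inf_le_inf_left a htn
      _ ≤ n • (a ⊓ b) := inf_nsmul_le_nsmul_inf ha hb n
      _ = 0 := by rw [hab, nsmul_zero])
    (le_inf ha ht)

theorem le_of_inf_eq_zero_of_le_add (ha : 0 ≤ a) (hb : 0 ≤ b) (hc : 0 ≤ c) (hab : a ⊓ b = 0)
    (h : a ≤ b + c) : a ≤ c :=
  calc a = a ⊓ (b + c) := (inf_eq_left.2 h).symm
    _ ≤ a ⊓ b + a ⊓ c := inf_add_le_inf_add_inf ha hb hc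
    _ = a ⊓ c := by rw [hab, zero_add]
    _ ≤ c := inf_le_right

end LatticeOrderedGroup

open TopologicalSpace in
theorem WeakSpace.isSeparable_of_isCompact {𝕜 E : Type*} [NormedField 𝕜] [AddCommGroup E]
    [TopologicalSpace E] [Module 𝕜 E] [SeparatingDual 𝕜 E] [SeparableSpace (WeakDual 𝕜 E)]
    {K : Set (WeakSpace 𝕜 E)} (hK : IsCompact K) : IsSeparable K := by
  let e := toWeakSpace 𝕜 E
  let φ : ℕ → K → 𝕜 := fun n a => denseSeq (WeakDual 𝕜 E) n (e.symm a)
  have hφ : ∀ n, Continuous (φ n) := fun n => by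
    have h : Continuous fun a : WeakSpace 𝕜 E => denseSeq (WeakDual 𝕜 E) n (e.symm a) :=
      WeakBilin.eval_continuous _ _
    exact h.comp continuous_subtype_val
  have hsep : Pairwise fun a b : K => ∃ n, φ n a ≠ φ n b := fun a b hab => by
    obtain ⟨f, hf⟩ := SeparatingDual.exists_separating_of_ne (R := 𝕜)
      ((e.symm.injective.comp Subtype.val_injective).ne hab)
    exact (denseRange_denseSeq _).exists_mem_open
      (isOpen_ne_fun (WeakDual.eval_continuous _) (WeakDual.eval_continuous _))
      ⟨StrongDual.toWeakDual f, hf⟩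
  have : CompactSpace K := isCompact_iff_compactSpace.mp hK
  have : MetrizableSpace K :=
    Metric.PiNatEmbed.TopologicalSpace.MetrizableSpace.of_countable_separating φ hφ hsep
  exact IsSeparable.of_subtype K

section ClosedIdeal

variable {X : Type*} [NormedAddCommGroup X] [Lattice X] [NormedSpace ℝ X]

theorem IsClosedIdeal.mem_of_abs_le_nsmul [IsOrderedAddMonoid X] {S : Set X}
    (hS : IsClosedIdeal S) {u x : X} (hu : 0 ≤ u) (huS : u ∈ S) {n : ℕ} (hx : |x| ≤ n • u) :
    x ∈ S :=
  hS.2.2.2.2 x _ (Nat.cast_smul_eq_nsmul ℝ n u ▸ hS.2.2.2.1 _ u huS)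
    (by rwa [abs_of_nonneg (nsmul_nonneg hu n)])

theorem IsClosedIdeal.convex {S : Set X} (hS : IsClosedIdeal S) : Convex ℝ S :=
  fun x hx y hy a b _ _ _ => hS.2.2.1 _ (hS.2.2.2.1 a x hx) _ (hS.2.2.2.1 b y hy)

theorem IsClosedIdeal.isClosed_toWeakSpace_image {S : Set X} (hS : IsClosedIdeal S) :
    IsClosed (toWeakSpace ℝ X '' S) := by
  rw [← closure_eq_iff_isClosed, ← hS.convex.toWeakSpace_closure ℝ, hS.1.closure_eq]

theorem isClosedIdeal_idealGen (A : Set X) : IsClosedIdeal (idealGen A) :=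
  ⟨isClosed_sInter fun _ hS => hS.1.1, fun _ hS => hS.1.2.1,
    fun _ hx _ hy S hS => hS.1.2.2.1 _ (hx S hS) _ (hy S hS),
    fun c _ hx S hS => hS.1.2.2.2.1 c _ (hx S hS),
    fun x _ hy hxy S hS => hS.1.2.2.2.2 x _ (hy S hS) hxy⟩

theorem subset_idealGen (A : Set X) : A ⊆ idealGen A := fun _ ha _ hS => hS.2 ha

theorem idealGen_subset {A S : Set X} (hS : IsClosedIdeal S) (h : A ⊆ S) : idealGen A ⊆ S :=
  sInter_subset_of_mem ⟨hS, h⟩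

theorem bandGen_subset {A S : Set X} (hS : IsBand S) (h : A ⊆ S) : bandGen A ⊆ S :=
  sInter_subset_of_mem ⟨hS, h⟩

end ClosedIdeal

theorem mem_disjComplement_singleton_comm {X : Type*} [NormedAddCommGroup X] [Lattice X]
    {x y : X} : x ∈ disjComplement {y} ↔ y ∈ disjComplement {x} := by
  simp only [disjComplement, mem_singleton_iff, forall_eq, mem_ofPred_eq, inf_comm]

section DisjointComplement

variable {X : Type*} [NormedAddCommGroup X] [Lattice X] [HasSolidNorm X] [IsOrderedAddMonoid X]
  [NormedSpace ℝ X]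

theorem abs_smul_le_nsmul_abs (c : ℝ) (x : X) : |c • x| ≤ ⌈|c|⌉₊ • |x| := by
  have := posSMulMono_real_of_orderClosedTopology (X := X)
  have hle : ∀ c : ℝ, c • x ≤ |c| • |x| := fun c => by
    rcases le_total 0 c with hc | hc
    · rw [abs_of_nonneg hc]
      exact smul_le_smul_of_nonneg_left (le_abs_self x) hc
    · rw [abs_of_nonpos hc, ← neg_smul_neg]
      exact smul_le_smul_of_nonneg_left (neg_le_abs x) (neg_nonneg.2 hc)
  calc |c • x| ≤ |c| • |x| := abs_le'.2 ⟨hle c, by simpa [neg_smul] using hle (-c)⟩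
    _ ≤ (⌈|c|⌉₊ : ℝ) • |x| := smul_le_smul_of_nonneg_right (Nat.le_ceil _) (abs_nonneg x)
    _ = ⌈|c|⌉₊ • |x| := Nat.cast_smul_eq_nsmul ℝ _ _

theorem isClosedIdeal_disjComplement (A : Set X) : IsClosedIdeal (disjComplement A) := by
  refine ⟨?closed, ?zero, ?add, ?smul, ?solid⟩
  case closed =>
    have : disjComplement A = ⋂ y ∈ A, (fun x : X => |x| ⊓ |y|) ⁻¹' {0} := by
      ext x; simp [disjComplement]
    rw [this]
    have hcont : Continuous fun x : X => |x| := continuous_id.sup continuous_neg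
    exact isClosed_biInter fun y _ => isClosed_singleton.preimage (hcont.inf continuous_const)
  case zero => intro y _; simp
  case add =>
    intro x hx z hz y hy
    refine le_antisymm ?_ (le_inf (abs_nonneg _) (abs_nonneg _))
    calc |x + z| ⊓ |y| ≤ |y| ⊓ (|x| + |z|) := by rw [inf_comm]; gcongr; exact abs_add_le x z
      _ ≤ |y| ⊓ |x| + |y| ⊓ |z| :=
        inf_add_le_inf_add_inf (abs_nonneg y) (abs_nonneg x) (abs_nonneg z)
      _ = 0 := by rw [inf_comm, hx y hy, inf_comm, hz y hy, add_zero]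
  case smul =>
    intro c x hx y hy
    rw [inf_comm]
    exact inf_eq_zero_of_le_nsmul (abs_nonneg y) (abs_nonneg x) (by rw [inf_comm, hx y hy])
      (abs_nonneg _) (abs_smul_le_nsmul_abs c x)
  case solid =>
    intro x z hz hxz y hy
    exact le_antisymm ((inf_le_inf_right _ hxz).trans (hz y hy).le)
      (le_inf (abs_nonneg _) (abs_nonneg _))

theorem isBand_disjComplement (A : Set X) : IsBand (disjComplement A) := by
  refine ⟨isClosedIdeal_disjComplement A, fun D hD x hx y hy => ?_⟩
  -- `b := |x| ⊓ |y|` is disjoint from every `d ∈ D`, and `b ≤ |d| + (x - d)`, so `x - b` is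
  -- again an upper bound of `D`.
  set b := |x| ⊓ |y|
  have hb : 0 ≤ b := le_inf (abs_nonneg x) (abs_nonneg y)
  have hub : x - b ∈ upperBounds D := fun d hd => by
    have hdx : 0 ≤ x - d := sub_nonneg.2 (hx.1 hd)
    have hbd : b ⊓ |d| = 0 := le_antisymm
      ((inf_le_inf_right _ inf_le_right).trans (by rw [inf_comm, hD hd y hy]))
      (le_inf hb (abs_nonneg d))
    refine le_sub_comm.1 (le_of_inf_eq_zero_of_le_add hb (abs_nonneg d) hdx hbd ?_)
    calc b ≤ |x| := inf_le_left
      _ = |d + (x - d)| := by rw [add_sub_cancel]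
      _ ≤ |d| + |x - d| := abs_add_le _ _
      _ = |d| + (x - d) := by rw [abs_of_nonneg hdx]
  exact le_antisymm (by simpa using hx.2 hub) hb

end DisjointComplement

section WeakOrderUnit

variable {X : Type*} [NormedAddCommGroup X] [Lattice X] [HasSolidNorm X] [IsOrderedAddMonoid X]
  [NormedSpace ℝ X]

theorem eq_zero_of_forall_nsmul_le {v y : X} (hv : 0 ≤ v) (h : ∀ n : ℕ, n • v ≤ y) : v = 0 := by
  by_contra hne
  obtain ⟨n, hn⟩ := exists_nat_gt (‖y‖ / ‖v‖)
  have hy : 0 ≤ y := by simpa using h 0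
  have : ‖n • v‖ ≤ ‖y‖ := norm_le_norm_of_abs_le_abs <| by
    rw [abs_of_nonneg (nsmul_nonneg hv n), abs_of_nonneg hy]; exact h n
  rw [RCLike.norm_nsmul ℝ, nsmul_eq_mul] at this
  exact this.not_gt ((div_lt_iff₀ (norm_pos_iff.2 hne)).1 hn)

theorem isLUB_range_inf_nsmul {u y : X} (hu : 0 ≤ u) (hunit : disjComplement {u} = {0})
    (hy : 0 ≤ y) : IsLUB (range fun n : ℕ => y ⊓ n • u) y := by
  refine ⟨forall_mem_range.2 fun n => inf_le_left, fun z hzub => ?_⟩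
  -- `v := (y - y ⊓ z) ⊓ u` satisfies `n • v ≤ y ⊓ n • u` for all `n`, so it vanishes; then
  -- `y - y ⊓ z` is disjoint from `u`.
  have hz : ∀ n : ℕ, y ⊓ n • u ≤ y ⊓ z := fun n => le_inf inf_le_left (hzub (mem_range_self n))
  set w := y - y ⊓ z
  have hw : 0 ≤ w := sub_nonneg.2 inf_le_left
  set v := w ⊓ u
  have key : ∀ n : ℕ, n • v ≤ y ⊓ n • u := by
    intro n
    induction n with
    | zero => simp [hy]
    | succ n ih =>
      have hvw : v ≤ y - y ⊓ n • u := inf_le_left.trans (sub_le_sub_left (hz n) y)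
      rw [succ_nsmul, succ_nsmul]
      refine le_inf ?_ (add_le_add (ih.trans inf_le_right) inf_le_right)
      calc n • v + v ≤ y ⊓ n • u + (y - y ⊓ n • u) := add_le_add ih hvw
        _ = y := add_sub_cancel _ _
  have hv : v = 0 := eq_zero_of_forall_nsmul_le (le_inf hw hu) fun n => (key n).trans inf_le_left
  have hw0 : w ∈ disjComplement {u} := by
    simpa [disjComplement, abs_of_nonneg hw, abs_of_nonneg hu] using hv
  rw [hunit, mem_singleton_iff, sub_eq_zero] at hw0
  exact hw0.le.trans inf_le_right

theorem bandGen_singleton_eq_univ {u : X} (hu : 0 ≤ u) (hunit : disjComplement {u} = {0}) :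
    bandGen {u} = univ := by
  refine eq_univ_of_forall fun z S ⟨hS, huS⟩ => ?_
  have hpos : ∀ y : X, 0 ≤ y → y ∈ S := fun y hy =>
    hS.2 _ (range_subset_iff.2 fun n => hS.1.mem_of_abs_le_nsmul hu (huS rfl) (n := n) <| by
      rw [abs_of_nonneg (le_inf hy (nsmul_nonneg hu n))]; exact inf_le_right)
      y (isLUB_range_inf_nsmul hu hunit hy)
  rw [← posPart_sub_negPart z, sub_eq_add_neg, ← neg_one_smul ℝ z⁻]
  exact hS.1.2.2.1 _ (hpos _ (posPart_nonneg z)) _ (hS.1.2.2.2.1 _ _ (hpos _ (negPart_nonneg z)))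

end WeakOrderUnit

section WeaklyCompactlyGenerated

variable {X : Type*} [NormedAddCommGroup X] [Lattice X] [HasSolidNorm X] [IsOrderedAddMonoid X]
  [NormedSpace ℝ X] [CompleteSpace X]

theorem exists_nonneg_forall_abs_le_nsmul (x : ℕ → X) :
    ∃ u : X, 0 ≤ u ∧ ∀ n, ∃ k : ℕ, |x n| ≤ k • u := by
  have := posSMulMono_real_of_orderClosedTopology (X := X)
  let k : ℕ → ℕ := fun n => ⌈2 ^ n * ‖x n‖⌉₊ + 1
  have hk : ∀ n, (0 : ℝ) < k n := fun n => by positivity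
  let t : ℕ → X := fun n => (k n : ℝ)⁻¹ • |x n|
  have ht : ∀ n, 0 ≤ t n := fun n => smul_nonneg (inv_nonneg.2 (hk n).le) (abs_nonneg _)
  have ht_norm : ∀ n, ‖t n‖ ≤ (1 / 2) ^ n := fun n => by
    have hkn : 2 ^ n * ‖x n‖ ≤ k n := (Nat.le_ceil _).trans (by simp [k])
    rw [norm_smul, norm_abs_eq_norm, norm_inv, Real.norm_natCast, inv_mul_le_iff₀ (hk n),
      one_div_pow, mul_one_div, le_div_iff₀ (by positivity)]
    linarith
  have hsum : Summable t := .of_norm_bounded summable_geometric_two ht_norm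
  refine ⟨∑' n, t n, tsum_nonneg ht, fun n => ⟨k n, ?_⟩⟩
  calc |x n| = k n • t n := by
        rw [← Nat.cast_smul_eq_nsmul ℝ, smul_smul, mul_inv_cancel₀ (hk n).ne', one_smul]
    _ ≤ k n • ∑' n, t n := nsmul_le_nsmul_right (hsum.le_tsum n fun m _ => ht m) _

theorem WeaklyCompact.exists_nonneg_subset_of_isClosedIdeal
    (hsep : TopologicalSpace.SeparableSpace (WeakDual ℝ X)) {K : Set X} (hK : WeaklyCompact K) :
    ∃ u : X, 0 ≤ u ∧ ∀ S : Set X, IsClosedIdeal S → u ∈ S → K ⊆ S := by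
  obtain ⟨c, hc, hKc⟩ := WeakSpace.isSeparable_of_isCompact hK
  obtain ⟨x, hcx⟩ := countable_iff_exists_subset_range.1 hc
  obtain ⟨u, hu, hxu⟩ := exists_nonneg_forall_abs_le_nsmul fun n => (toWeakSpace ℝ X).symm (x n)
  refine ⟨u, hu, fun S hS huS y hy => ?_⟩
  have hcS : c ⊆ toWeakSpace ℝ X '' S := hcx.trans <| range_subset_iff.2 fun n => by
    obtain ⟨k, hk⟩ := hxu n
    exact ⟨_, hS.mem_of_abs_le_nsmul hu huS hk, LinearEquiv.apply_symm_apply _ _⟩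
  obtain ⟨z, hz, hzy⟩ := closure_minimal hcS hS.isClosed_toWeakSpace_image (hKc ⟨y, hy, rfl⟩)
  rwa [← (toWeakSpace ℝ X).injective hzy]

end WeaklyCompactlyGenerated

/-- if X* is w*-separable, then X is IWCG iff X has a quasi-interior
point, and X is BWCG iff X has a weak order unit. -/
theorem IWCG_BWCG_iff_of_wstar_separable_dual
    {X : Type*} [NormedAddCommGroup X] [Lattice X] [HasSolidNorm X] [IsOrderedAddMonoid X] [NormedSpace ℝ X] [CompleteSpace X]
    (hsep : TopologicalSpace.SeparableSpace (WeakDual ℝ X)) :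
    ((∃ K : Set X, WeaklyCompact K ∧ idealGen K = Set.univ) ↔
      (∃ u : X, 0 ≤ u ∧ idealGen ({u} : Set X) = Set.univ)) ∧
    ((∃ K : Set X, WeaklyCompact K ∧ bandGen K = Set.univ) ↔
      (∃ u : X, 0 ≤ u ∧ disjComplement ({u} : Set X) = {0})) := by
  have weaklyCompact_singleton : ∀ u : X, WeaklyCompact {u} := fun u => by
    rw [WeaklyCompact, image_singleton]; exact isCompact_singleton
  refine ⟨⟨fun ⟨K, hK, hKI⟩ => ?_, fun ⟨u, _, hu⟩ => ⟨{u}, weaklyCompact_singleton u, hu⟩⟩,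
    ⟨fun ⟨K, hK, hKB⟩ => ?_, fun ⟨u, hu, hunit⟩ =>
      ⟨{u}, weaklyCompact_singleton u, bandGen_singleton_eq_univ hu hunit⟩⟩⟩
  · obtain ⟨u, hu, hKS⟩ := hK.exists_nonneg_subset_of_isClosedIdeal hsep
    refine ⟨u, hu, univ_subset_iff.1 (hKI ▸ idealGen_subset (isClosedIdeal_idealGen _) ?_)⟩
    exact hKS _ (isClosedIdeal_idealGen _) (subset_idealGen _ rfl)
  · obtain ⟨u, hu, hKS⟩ := hK.exists_nonneg_subset_of_isClosedIdeal hsep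
    refine ⟨u, hu, eq_singleton_iff_unique_mem.2 ⟨by simp [disjComplement], fun w hw => ?_⟩⟩
    have hband := isBand_disjComplement ({w} : Set X)
    have hB : bandGen K ⊆ disjComplement {w} :=
      bandGen_subset hband (hKS _ hband.1 (mem_disjComplement_singleton_comm.1 hw))
    have hww : |w| ⊓ |w| = 0 := (hKB ▸ hB) (mem_univ w) w rfl
    rw [inf_idem] at hww
    rw [← norm_eq_zero, ← norm_abs_eq_norm, hww, norm_zero]
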